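/- arXiv:2305.16573 — 2 statements merged into one kernel-verified Lean document; each statement's English description precedes it below -/
import Mathlib

section
/- Let C ≥ 2 and let w_1,...,w_C ∈ ℝ^d be the columns of a simplex equiangular tight frame with unit norms, i.e., ‖w_k‖ = 1 for all k and ⟨w_k, w_l⟩ = -1/(C-1) for k ≠ l. For a feature vector g ∈ ℝ^d and label y ∈ {1,...,C}, let p_k(g) = exp(⟨w_k, g⟩)/Σ_{l=1}^C exp(⟨w_l, g⟩) be the softmax probability, and let L_CE(g) = -log p_y(g) be the cross-entropy loss. Then the norm of the gradient of L_CE with respect to g satisfies ‖∇_g L_CE(g)‖ ≥ (C/(C-1))·(1 - p_y(g)); in particular ‖∇_g L_CE(g)‖ ≥ 1 - p_y(g). -/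
open scoped InnerProductSpace
open Finset

/-- For a simplex ETF classifier with unit-norm columns, the norm of the
gradient of the cross-entropy loss w.r.t. the feature is at least `(C/(C-1))·(1 - p_y(g))`,
in particular at least `1 - p_y(g)`. -/
theorem stmt_0 (d C : ℕ) (hC : 2 ≤ C)
    (w : Fin C → EuclideanSpace ℝ (Fin d))
    (hnorm : ∀ k, ‖w k‖ = 1)
    (hangle : ∀ k l, k ≠ l → ⟪w k, w l⟫_ℝ = -1 / ((C : ℝ) - 1))
    (g : EuclideanSpace ℝ (Fin d)) (y : Fin C)
    (p : Fin C → ℝ)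
    (hp : ∀ k, p k = Real.exp ⟪w k, g⟫_ℝ / ∑ l, Real.exp ⟪w l, g⟫_ℝ)
    (grad : EuclideanSpace ℝ (Fin d))
    (hgrad : grad = -((1 - p y) • w y) + ∑ l ∈ Finset.univ.erase y, p l • w l) :
    ‖grad‖ ≥ ((C : ℝ) / ((C : ℝ) - 1)) * (1 - p y) ∧ ‖grad‖ ≥ 1 - p y := by
  have hC1 : (1:ℝ) ≤ (C:ℝ) - 1 := by
    have h2 : (2:ℝ) ≤ (C:ℝ) := by exact_mod_cast hC
    linarith
  have hC0 : (0:ℝ) < (C:ℝ) - 1 := by linarith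
  have hS : 0 < ∑ l, Real.exp ⟪w l, g⟫_ℝ :=
    Finset.sum_pos (fun l _ => Real.exp_pos _) ⟨y, Finset.mem_univ y⟩
  have hsum : ∑ k, p k = 1 := by
    simp only [hp]
    rw [← Finset.sum_div, div_self (ne_of_gt hS)]
  have hpnn : ∀ k, 0 ≤ p k := fun k => by
    rw [hp]; positivity
  have hpy1 : p y ≤ 1 := by
    have h := Finset.single_le_sum (f := p) (fun k _ => hpnn k) (Finset.mem_univ y)
    linarith
  have hrest : ∑ l ∈ Finset.univ.erase y, p l = 1 - p y := by
    have h := Finset.add_sum_erase Finset.univ p (Finset.mem_univ y)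
    linarith
  have h1 : ⟪w y, w y⟫_ℝ = 1 := by
    rw [real_inner_self_eq_norm_sq, hnorm]; norm_num
  have hinner : ⟪grad, w y⟫_ℝ = -(((C:ℝ)/((C:ℝ)-1)) * (1 - p y)) := by
    rw [hgrad, inner_add_left, inner_neg_left, sum_inner]
    have hterm : ∀ l ∈ Finset.univ.erase y,
        ⟪p l • w l, w y⟫_ℝ = p l * (-1/((C:ℝ)-1)) := by
      intro l hl
      rw [real_inner_smul_left, hangle l y (Finset.ne_of_mem_erase hl)]
    rw [Finset.sum_congr rfl hterm, ← Finset.sum_mul, hrest,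
        real_inner_smul_left, h1]
    field_simp
    ring
  have hle : |⟪grad, w y⟫_ℝ| ≤ ‖grad‖ := by
    have h := abs_real_inner_le_norm grad (w y)
    rwa [hnorm y, mul_one] at h
  have habs : |⟪grad, w y⟫_ℝ| = ((C:ℝ)/((C:ℝ)-1)) * (1 - p y) := by
    rw [hinner, abs_neg, abs_of_nonneg]
    have : 0 ≤ (C:ℝ)/((C:ℝ)-1) := by positivity
    nlinarith
  have hmain : ‖grad‖ ≥ ((C:ℝ)/((C:ℝ)-1)) * (1 - p y) := by
    rw [← habs]; exact hle
  refine ⟨hmain, ?_⟩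
  have hge1 : (1:ℝ) ≤ (C:ℝ)/((C:ℝ)-1) := by
    rw [le_div_iff₀ hC0]; linarith
  nlinarith
end

section
/- Let δ ∈ (1/√2, 1], and let u, v ∈ ℝ^d be unit vectors. Suppose there exist unit vectors a, b ∈ ℝ^d with ⟨a, b⟩ = -1/(C-1) for some C ≥ 2, such that ⟨a, u⟩ ≥ δ and ⟨b, v⟩ ≥ δ, and the angles satisfy ∠(a,b) - ∠(a,u) - ∠(b,v) ≥ 0. Then ⟨u, v⟩ ≤ 2δ·√(1 - δ²). -/
set_option maxHeartbeats 1000000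


open scoped InnerProductSpace

private lemma arccos_anti {x y : ℝ} (h : x ≤ y) : Real.arccos y ≤ Real.arccos x := by
  unfold Real.arccos
  exact sub_le_sub_left (Real.monotone_arcsin h) _

private lemma inner_abs_le_one {E : Type*} [NormedAddCommGroup E] [InnerProductSpace ℝ E]
    {x y : E} (hx : ‖x‖ = 1) (hy : ‖y‖ = 1) : |⟪x, y⟫_ℝ| ≤ 1 := by
  have h := abs_real_inner_le_norm x y
  rw [hx, hy, mul_one] at h
  exact h

/-- Cauchy–Schwarz in the orthogonal complement of `y`. -/
private lemma key_ineq {E : Type*} [NormedAddCommGroup E] [InnerProductSpace ℝ E]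
    (x y z : E) (hx : ‖x‖ = 1) (hy : ‖y‖ = 1) (hz : ‖z‖ = 1) :
    ⟪x, z⟫_ℝ ≤ ⟪x, y⟫_ℝ * ⟪y, z⟫_ℝ +
      Real.sqrt (1 - ⟪x, y⟫_ℝ ^ 2) * Real.sqrt (1 - ⟪y, z⟫_ℝ ^ 2) := by
  have hyy : ⟪y, y⟫_ℝ = 1 := by
    rw [real_inner_self_eq_norm_sq, hy]; norm_num
  have h1 : ⟪x - ⟪x, y⟫_ℝ • y, z - ⟪y, z⟫_ℝ • y⟫_ℝ = ⟪x, z⟫_ℝ - ⟪x, y⟫_ℝ * ⟪y, z⟫_ℝ := by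
    simp only [inner_sub_left, inner_sub_right, real_inner_smul_left, real_inner_smul_right,
      hyy, mul_one, real_inner_comm y x]
    ring
  have h2 : ‖x - ⟪x, y⟫_ℝ • y‖ ^ 2 = 1 - ⟪x, y⟫_ℝ ^ 2 := by
    rw [norm_sub_sq_real, real_inner_smul_right, norm_smul, hx, hy]
    simp [Real.norm_eq_abs, mul_pow, sq_abs]
    ring
  have h3 : ‖z - ⟪y, z⟫_ℝ • y‖ ^ 2 = 1 - ⟪y, z⟫_ℝ ^ 2 := by
    rw [norm_sub_sq_real, real_inner_smul_right, real_inner_comm z y, norm_smul, hz, hy]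
    simp [Real.norm_eq_abs, mul_pow, sq_abs]
    ring
  have h4 : ‖x - ⟪x, y⟫_ℝ • y‖ = Real.sqrt (1 - ⟪x, y⟫_ℝ ^ 2) := by
    rw [← h2, Real.sqrt_sq (norm_nonneg _)]
  have h5 : ‖z - ⟪y, z⟫_ℝ • y‖ = Real.sqrt (1 - ⟪y, z⟫_ℝ ^ 2) := by
    rw [← h3, Real.sqrt_sq (norm_nonneg _)]
  have h6 := real_inner_le_norm (x - ⟪x, y⟫_ℝ • y) (z - ⟪y, z⟫_ℝ • y)
  rw [h1, h4, h5] at h6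
  linarith

/-- Reverse angle triangle inequality: `∠(x,z) ≥ ∠(x,y) - ∠(y,z)` for unit vectors. -/
private lemma arccos_sub_le {E : Type*} [NormedAddCommGroup E] [InnerProductSpace ℝ E]
    (x y z : E) (hx : ‖x‖ = 1) (hy : ‖y‖ = 1) (hz : ‖z‖ = 1) :
    Real.arccos ⟪x, y⟫_ℝ - Real.arccos ⟪y, z⟫_ℝ ≤ Real.arccos ⟪x, z⟫_ℝ := by
  rcases le_or_gt (Real.arccos ⟪x, y⟫_ℝ) (Real.arccos ⟪y, z⟫_ℝ) with h | h
  · have := Real.arccos_nonneg ⟪x, z⟫_ℝ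
    linarith
  · have hp1 := inner_abs_le_one hx hy
    have hq1 := inner_abs_le_one hy hz
    have hxz1 := inner_abs_le_one hx hz
    have hcos : Real.cos (Real.arccos ⟪x, y⟫_ℝ - Real.arccos ⟪y, z⟫_ℝ) =
        ⟪x, y⟫_ℝ * ⟪y, z⟫_ℝ + Real.sqrt (1 - ⟪x, y⟫_ℝ ^ 2) * Real.sqrt (1 - ⟪y, z⟫_ℝ ^ 2) := by
      rw [Real.cos_sub, Real.cos_arccos (abs_le.mp hp1).1 (abs_le.mp hp1).2,
        Real.cos_arccos (abs_le.mp hq1).1 (abs_le.mp hq1).2,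
        Real.sin_arccos, Real.sin_arccos]
    have hle : ⟪x, z⟫_ℝ ≤ Real.cos (Real.arccos ⟪x, y⟫_ℝ - Real.arccos ⟪y, z⟫_ℝ) := by
      rw [hcos]; exact key_ineq x y z hx hy hz
    have h0 : 0 ≤ Real.arccos ⟪x, y⟫_ℝ - Real.arccos ⟪y, z⟫_ℝ := by linarith
    have hπ : Real.arccos ⟪x, y⟫_ℝ - Real.arccos ⟪y, z⟫_ℝ ≤ Real.pi := by
      have h1 := Real.arccos_le_pi ⟪x, y⟫_ℝ
      have h2 := Real.arccos_nonneg ⟪y, z⟫_ℝ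
      linarith
    have h3 := arccos_anti hle
    rwa [Real.arccos_cos h0 hπ] at h3

/-- If unit vectors `u, v` are each `δ`-aligned (δ ∈ (1/√2, 1]) with two
simplex-ETF directions `a, b` (inner product `-1/(C-1)`), and the angle
`∠(a,b) - ∠(a,u) - ∠(b,v)` is nonnegative, then `⟨u, v⟩ ≤ 2δ√(1-δ²)`. -/
theorem stmt_3 (d C : ℕ) (hC : 2 ≤ C)
    (δ : ℝ) (hδ : δ ∈ Set.Ioc (1 / Real.sqrt 2) 1)
    (u v a b : EuclideanSpace ℝ (Fin d))
    (hu : ‖u‖ = 1) (hv : ‖v‖ = 1) (ha : ‖a‖ = 1) (hb : ‖b‖ = 1)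
    (hab : ⟪a, b⟫_ℝ = -1 / ((C : ℝ) - 1))
    (hau : ⟪a, u⟫_ℝ ≥ δ) (hbv : ⟪b, v⟫_ℝ ≥ δ)
    (hangle : Real.arccos ⟪a, b⟫_ℝ - Real.arccos ⟪a, u⟫_ℝ - Real.arccos ⟪b, v⟫_ℝ ≥ 0) :
    ⟪u, v⟫_ℝ ≤ 2 * δ * Real.sqrt (1 - δ ^ 2) := by
  obtain ⟨hδl, hδr⟩ := hδ
  have h2 : (0:ℝ) < Real.sqrt 2 := Real.sqrt_pos.mpr (by norm_num)
  have hδ0 : 0 < δ := lt_trans (by positivity) hδl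
  set α := Real.arccos ⟪a, b⟫_ℝ with hα
  set β₁ := Real.arccos ⟪a, u⟫_ℝ with hβ₁
  set β₂ := Real.arccos ⟪b, v⟫_ℝ with hβ₂
  set β := Real.arccos δ with hβ
  have hβ₁le : β₁ ≤ β := arccos_anti hau
  have hβ₂le : β₂ ≤ β := arccos_anti hbv
  have hβ₁0 : 0 ≤ β₁ := Real.arccos_nonneg _
  have hβ₂0 : 0 ≤ β₂ := Real.arccos_nonneg _
  have hαπ : α ≤ Real.pi := Real.arccos_le_pi _
  -- angle between u and v is at least α - β₁ - β₂
  have s1 : α - β₂ ≤ Real.arccos ⟪a, v⟫_ℝ := arccos_sub_le a b v ha hb hv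
  have s2 : Real.arccos ⟪v, a⟫_ℝ - β₁ ≤ Real.arccos ⟪v, u⟫_ℝ := arccos_sub_le v a u hv ha hu
  have e1 : ⟪v, a⟫_ℝ = ⟪a, v⟫_ℝ := (real_inner_comm v a).symm
  have e2 : ⟪v, u⟫_ℝ = ⟪u, v⟫_ℝ := (real_inner_comm v u).symm
  rw [e1, e2] at s2
  have huv : α - β₁ - β₂ ≤ Real.arccos ⟪u, v⟫_ℝ := by linarith
  have huv1 : |⟪u, v⟫_ℝ| ≤ 1 := inner_abs_le_one hu hv
  have hcosuv : ⟪u, v⟫_ℝ ≤ Real.cos (α - β₁ - β₂) := by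
    have h1 : ⟪u, v⟫_ℝ = Real.cos (Real.arccos ⟪u, v⟫_ℝ) :=
      (Real.cos_arccos (abs_le.mp huv1).1 (abs_le.mp huv1).2).symm
    rw [h1]
    exact Real.cos_le_cos_of_nonneg_of_le_pi (by linarith) (Real.arccos_le_pi _) huv
  have hC1 : (1:ℝ) ≤ (C:ℝ) - 1 := by
    have : (2:ℝ) ≤ (C:ℝ) := by exact_mod_cast hC
    linarith
  have habneg : ⟪a, b⟫_ℝ ≤ 0 := by
    rw [hab]
    apply div_nonpos_of_nonpos_of_nonneg <;> linarith
  have hαhalf : Real.pi / 2 ≤ α := by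
    have := arccos_anti habneg
    rwa [Real.arccos_zero] at this
  have hβ4 : β ≤ Real.pi / 4 := by
    rw [hβ, Real.arccos_le_pi_div_four]
    have hs : Real.sqrt 2 / 2 = 1 / Real.sqrt 2 := by
      rw [div_eq_div_iff (by norm_num : (2:ℝ) ≠ 0) (ne_of_gt h2), one_mul]
      exact Real.mul_self_sqrt (by norm_num)
    rw [hs]
    exact le_of_lt hδl
  have hπ4 : Real.pi / 4 > 0 := by positivity
  have hmono : Real.cos (α - β₁ - β₂) ≤ Real.cos (α - 2 * β) := by
    apply Real.cos_le_cos_of_nonneg_of_le_pi (by linarith) (by linarith) (by linarith)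
  have hcosβ : Real.cos β = δ := Real.cos_arccos (by linarith) hδr
  have hsinβ : Real.sin β = Real.sqrt (1 - δ ^ 2) := Real.sin_arccos δ
  have habs : |⟪a, b⟫_ℝ| ≤ 1 := inner_abs_le_one ha hb
  have hcosα : Real.cos α = -1 / ((C:ℝ) - 1) := by
    rw [hα, Real.cos_arccos (abs_le.mp habs).1 (abs_le.mp habs).2, hab]
  have hsinα0 : 0 ≤ Real.sin α := Real.sin_nonneg_of_nonneg_of_le_pi (by linarith) hαπ
  have hsinα1 : Real.sin α ≤ 1 := Real.sin_le_one _
  have hid : Real.cos (α - 2 * β) =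
      Real.cos α * (2 * δ ^ 2 - 1) + Real.sin α * (2 * Real.sqrt (1 - δ ^ 2) * δ) := by
    rw [Real.cos_sub, Real.cos_two_mul, Real.sin_two_mul, hcosβ, hsinβ]
  have hδsq : (1:ℝ) / 2 ≤ δ ^ 2 := by
    have h2' : ((1:ℝ) / Real.sqrt 2) ^ 2 = 1 / 2 := by
      rw [div_pow, one_pow, Real.sq_sqrt (by norm_num : (0:ℝ) ≤ 2)]
    nlinarith [le_of_lt hδl, (by positivity : (0:ℝ) ≤ 1 / Real.sqrt 2)]
  have hcosαneg : Real.cos α ≤ 0 := by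
    rw [hcosα]; apply div_nonpos_of_nonpos_of_nonneg <;> linarith
  have hsq : 0 ≤ Real.sqrt (1 - δ ^ 2) := Real.sqrt_nonneg _
  have hfinal : Real.cos (α - 2 * β) ≤ 2 * δ * Real.sqrt (1 - δ ^ 2) := by
    rw [hid]
    nlinarith [mul_nonneg hsq hδ0.le]
  linarith
end
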